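/- arXiv:2402.11144 — 3 statements merged into one kernel-verified Lean document; each statement's English description precedes it below -/
import Mathlib

section
/- Let u : ℝ³ → ℝ³ be a smooth divergence-free vector field, and suppose V : ℝ³ → ℝ^{3×3} is a smooth matrix-valued function with V antisymmetric pointwise (Vᵢⱼ = −Vⱼᵢ) and ∂ᵢ Vᵢⱼ = uⱼ. Let η : ℝ³ → ℝ be a smooth compactly supported function. Then ∫_{ℝ³} Vₖᵢ [(∂ᵢₖ uⱼ) uⱼ η + (∂ᵢ uⱼ)(∂ₖ uⱼ) η] dx = 0, and consequently ∫_{ℝ³} (u·∇u)·u η dx = −∫_{ℝ³} Vₖᵢ (∂ᵢ uⱼ) uⱼ (∂ₖ η) dx. -/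
open MeasureTheory Real Filter
noncomputable section
abbrev E3 := EuclideanSpace ℝ (Fin 3)
/-- The partial derivative `∂ᵢ f` of a scalar function on `ℝ³`. -/
def pd (i : Fin 3) (f : E3 → ℝ) (x : E3) : ℝ := fderiv ℝ f x (EuclideanSpace.single i 1)

lemma contDiff_pd {f : E3 → ℝ} (hf : ContDiff ℝ (⊤ : ℕ∞) f) (i : Fin 3) :
    ContDiff ℝ (⊤ : ℕ∞) (pd i f) :=
  (hf.fderiv_right (m := (⊤ : ℕ∞)) le_rfl).clm_apply contDiff_const

lemma pd_mul {f g : E3 → ℝ} {x : E3} (hf : DifferentiableAt ℝ f x)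
    (hg : DifferentiableAt ℝ g x) (i : Fin 3) :
    pd i (fun y => f y * g y) x = pd i f x * g x + f x * pd i g x := by
  unfold pd
  rw [fderiv_fun_mul hf hg]
  simp [mul_comm]
  ring

lemma pd_sum {s : Finset (Fin 3)} {F : Fin 3 → E3 → ℝ} {x : E3}
    (hF : ∀ j ∈ s, DifferentiableAt ℝ (F j) x) (i : Fin 3) :
    pd i (fun y => ∑ j ∈ s, F j y) x = ∑ j ∈ s, pd i (F j) x := by
  unfold pd
  rw [fderiv_fun_sum hF]
  simp

lemma pd_comm {f : E3 → ℝ} (hf : ContDiff ℝ (⊤ : ℕ∞) f) (i k : Fin 3) (x : E3) :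
    pd i (pd k f) x = pd k (pd i f) x := by
  have hsymm : IsSymmSndFDerivAt ℝ f x :=
    (hf.contDiffAt).isSymmSndFDerivAt (by rw [minSmoothness_of_isRCLikeNormedField]; exact WithTop.coe_le_coe.mpr (le_top : (2 : ℕ∞) ≤ ⊤))
  have hd : DifferentiableAt ℝ (fderiv ℝ f) x :=
    ((hf.fderiv_right (m := (⊤ : ℕ∞)) le_rfl).differentiable (by simp)).differentiableAt
  have key : ∀ v w : E3, fderiv ℝ (fun y => fderiv ℝ f y w) x v = fderiv ℝ (fderiv ℝ f) x v w := by
    intro v w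
    rw [fderiv_clm_apply hd (differentiableAt_const w)]
    simp
  unfold pd
  rw [key, key, hsymm]

lemma integral_pd_eq_zero {F : E3 → ℝ} (hF : ContDiff ℝ (⊤ : ℕ∞) F) (hFc : HasCompactSupport F)
    (k : Fin 3) : ∫ x, pd k F x = 0 := by
  have hdF : Continuous (pd k F) := (contDiff_pd hF k).continuous
  have hdFc : HasCompactSupport (pd k F) := hFc.fderiv_apply ℝ (EuclideanSpace.single k 1)
  have h := integral_mul_fderiv_eq_neg_fderiv_mul_of_integrable
    (μ := (volume : Measure E3)) (f := F) (g := fun _ => (1:ℝ)) (v := EuclideanSpace.single k 1)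
    (by simp only [mul_one]; exact hdF.integrable_of_hasCompactSupport hdFc)
    (by simp [fderiv_fun_const]) (by simpa using hF.continuous.integrable_of_hasCompactSupport hFc)
    (fun x _ => hF.differentiable (by simp) x) (fun x _ => differentiableAt_const _)
  simp only [fderiv_fun_const, Pi.zero_apply, ContinuousLinearMap.zero_apply, mul_zero, mul_one,
    integral_zero] at h
  unfold pd
  linarith [h]

lemma sum_antisymm {g : Fin 3 → Fin 3 → ℝ} (h : ∀ k i, g k i = - g i k) :
    ∑ k, ∑ i, g k i = 0 := by
  have h2 : (∑ k, ∑ i, g k i) = - ∑ k, ∑ i, g k i := by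
    conv_rhs => rw [Finset.sum_comm]
    rw [← Finset.sum_neg_distrib]
    refine Finset.sum_congr rfl fun k _ => ?_
    rw [← Finset.sum_neg_distrib]
    exact Finset.sum_congr rfl fun i _ => h k i
  linarith

theorem stmt_5 (u : E3 → E3) (V : E3 → Fin 3 → Fin 3 → ℝ) (η : E3 → ℝ)
    (hu : ContDiff ℝ (⊤ : ℕ∞) u) (hV : ContDiff ℝ (⊤ : ℕ∞) V)
    (hdivu : ∀ x, ∑ i, pd i (fun y => u y i) x = 0)
    (hanti : ∀ x i j, V x i j = - V x j i)
    (hdivV : ∀ x j, ∑ i, pd i (fun y => V y i j) x = u x j)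
    (hη : ContDiff ℝ (⊤ : ℕ∞) η) (hηc : HasCompactSupport η) :
    (∫ x, ∑ k, ∑ i, ∑ j, V x k i *
        (pd i (fun y => pd k (fun z => u z j) y) x * u x j * η x
          + pd i (fun y => u y j) x * pd k (fun y => u y j) x * η x) = 0)
    ∧ (∫ x, (∑ i, ∑ j, u x i * pd i (fun y => u y j) x * u x j) * η x
        = - ∫ x, ∑ k, ∑ i, ∑ j,
            V x k i * pd i (fun y => u y j) x * u x j * pd k η x) := by
  have hujc : ∀ j, ContDiff ℝ (⊤ : ℕ∞) fun x => u x j := fun j => contDiff_euclidean.mp hu j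
  have hVc : ∀ k i, ContDiff ℝ (⊤ : ℕ∞) fun x => V x k i :=
    fun k i => contDiff_pi.mp (contDiff_pi.mp hV k) i
  have hpdu : ∀ (i j : Fin 3), ContDiff ℝ (⊤ : ℕ∞) (pd i fun x => u x j) :=
    fun i j => contDiff_pd (hujc j) i
  -- Part 1 : the integrand vanishes pointwise by (anti)symmetry
  have hpt1 : ∀ x : E3, (∑ k, ∑ i, ∑ j, V x k i *
        (pd i (fun y => pd k (fun z => u z j) y) x * u x j * η x
          + pd i (fun y => u y j) x * pd k (fun y => u y j) x * η x)) = 0 := by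
    intro x
    apply sum_antisymm
    intro k i
    rw [← Finset.sum_neg_distrib]
    refine Finset.sum_congr rfl fun j _ => ?_
    show V x k i * (pd i (pd k (fun z => u z j)) x * u x j * η x
          + pd i (fun z => u z j) x * pd k (fun z => u z j) x * η x)
        = -(V x i k * (pd k (pd i (fun z => u z j)) x * u x j * η x
          + pd k (fun z => u z j) x * pd i (fun z => u z j) x * η x))
    rw [hanti x k i, pd_comm (hujc j) i k]
    ring
  constructor
  · simp only [hpt1, integral_zero]
  -- Part 2 : integration by parts
  have hd : ∀ {f : E3 → ℝ}, ContDiff ℝ (⊤ : ℕ∞) f → ∀ y, DifferentiableAt ℝ f y :=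
    fun hf y => hf.differentiable (by simp) y
  have hterm : ∀ k i j, ContDiff ℝ (⊤ : ℕ∞) (fun y => V y k i * pd i (fun z => u z j) y * u y j) :=
    fun k i j => ((hVc k i).mul (hpdu i j)).mul (hujc j)
  have hW : ∀ k, ContDiff ℝ (⊤ : ℕ∞) (fun y => ∑ i, ∑ j, V y k i * pd i (fun z => u z j) y * u y j) :=
    fun k => ContDiff.sum fun i _ => ContDiff.sum fun j _ => hterm k i j
  have hF : ∀ k, ContDiff ℝ (⊤ : ℕ∞)
      (fun y => (∑ i, ∑ j, V y k i * pd i (fun z => u z j) y * u y j) * η y) :=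
    fun k => (hW k).mul hη
  have hFc : ∀ k, HasCompactSupport
      (fun y => (∑ i, ∑ j, V y k i * pd i (fun z => u z j) y * u y j) * η y) :=
    fun k => hηc.mul_left
  have hint0 : ∫ x, ∑ k,
      pd k (fun y => (∑ i, ∑ j, V y k i * pd i (fun z => u z j) y * u y j) * η y) x = 0 := by
    rw [integral_finset_sum _ (fun k _ =>
      (contDiff_pd (hF k) k).continuous.integrable_of_hasCompactSupport
        ((hFc k).fderiv_apply ℝ _))]
    simp only [fun k => integral_pd_eq_zero (hF k) (hFc k) k, Finset.sum_const_zero]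
  -- pointwise expansion of the divergence
  have hexp : ∀ x : E3, (∑ k,
      pd k (fun y => (∑ i, ∑ j, V y k i * pd i (fun z => u z j) y * u y j) * η y) x)
      = (∑ i, ∑ j, u x i * pd i (fun y => u y j) x * u x j) * η x
        + ∑ k, (∑ i, ∑ j, V x k i * pd i (fun z => u z j) x * u x j) * pd k η x := by
    intro x
    have e3 : ∀ k i j, pd k (fun y => V y k i * pd i (fun z => u z j) y * u y j) x
        = pd k (fun y => V y k i) x * pd i (fun z => u z j) x * u x j
          + V x k i * (pd i (pd k (fun z => u z j)) x * u x j
            + pd i (fun z => u z j) x * pd k (fun z => u z j) x) := by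
      intro k i j
      rw [pd_mul (hd ((hVc k i).mul (hpdu i j)) x) (hd (hujc j) x),
        pd_mul (hd (hVc k i) x) (hd (hpdu i j) x), pd_comm (hujc j) i k]
      ring
    have e12 : ∀ k, pd k
        (fun y => (∑ i, ∑ j, V y k i * pd i (fun z => u z j) y * u y j) * η y) x
        = (∑ i, ∑ j, (pd k (fun y => V y k i) x * (pd i (fun z => u z j) x * u x j * η x)
            + V x k i * (pd i (pd k (fun z => u z j)) x * u x j * η x
              + pd i (fun z => u z j) x * pd k (fun z => u z j) x * η x)))
          + (∑ i, ∑ j, V x k i * pd i (fun z => u z j) x * u x j) * pd k η x := by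
      intro k
      rw [pd_mul (hd (hW k) x) (hd hη x),
        pd_sum (fun i _ => hd (ContDiff.sum fun j _ => hterm k i j) x),
        Finset.sum_mul]
      congr 1
      refine Finset.sum_congr rfl fun i _ => ?_
      rw [pd_sum (fun j _ => hd (hterm k i j) x), Finset.sum_mul]
      refine Finset.sum_congr rfl fun j _ => ?_
      rw [e3 k i j]
      ring
    have T1 : ∑ k, ∑ i, ∑ j,
        pd k (fun y => V y k i) x * (pd i (fun z => u z j) x * u x j * η x)
        = (∑ i, ∑ j, u x i * pd i (fun y => u y j) x * u x j) * η x := by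
      rw [Finset.sum_comm, Finset.sum_mul]
      refine Finset.sum_congr rfl fun i _ => ?_
      rw [Finset.sum_comm, Finset.sum_mul]
      refine Finset.sum_congr rfl fun j _ => ?_
      rw [← Finset.sum_mul, hdivV x i]
      ring
    calc ∑ k, pd k (fun y => (∑ i, ∑ j, V y k i * pd i (fun z => u z j) y * u y j) * η y) x
        = (∑ k, ∑ i, ∑ j, (pd k (fun y => V y k i) x * (pd i (fun z => u z j) x * u x j * η x)
            + V x k i * (pd i (pd k (fun z => u z j)) x * u x j * η x
              + pd i (fun z => u z j) x * pd k (fun z => u z j) x * η x)))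
          + ∑ k, (∑ i, ∑ j, V x k i * pd i (fun z => u z j) x * u x j) * pd k η x := by
          rw [← Finset.sum_add_distrib]
          exact Finset.sum_congr rfl fun k _ => e12 k
      _ = ((∑ k, ∑ i, ∑ j, pd k (fun y => V y k i) x * (pd i (fun z => u z j) x * u x j * η x))
            + ∑ k, ∑ i, ∑ j, V x k i * (pd i (pd k (fun z => u z j)) x * u x j * η x
              + pd i (fun z => u z j) x * pd k (fun z => u z j) x * η x))
          + ∑ k, (∑ i, ∑ j, V x k i * pd i (fun z => u z j) x * u x j) * pd k η x := by
          simp only [Finset.sum_add_distrib]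
      _ = (∑ i, ∑ j, u x i * pd i (fun y => u y j) x * u x j) * η x
          + ∑ k, (∑ i, ∑ j, V x k i * pd i (fun z => u z j) x * u x j) * pd k η x := by
          rw [T1, hpt1 x, add_zero]
  simp only [hexp] at hint0
  have hL : Integrable (fun x => (∑ i, ∑ j, u x i * pd i (fun y => u y j) x * u x j) * η x) :=
    (((ContDiff.sum fun i (_ : i ∈ Finset.univ) => ContDiff.sum
        fun j (_ : j ∈ Finset.univ) =>
          ((hujc i).mul (hpdu i j)).mul (hujc j)).mul hη).continuous).integrable_of_hasCompactSupport
      hηc.mul_left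
  have hR : Integrable (fun x =>
      ∑ k, (∑ i, ∑ j, V x k i * pd i (fun z => u z j) x * u x j) * pd k η x) := by
    apply integrable_finset_sum
    intro k _
    exact (((hW k).mul (contDiff_pd hη k)).continuous).integrable_of_hasCompactSupport
      ((hηc.fderiv_apply ℝ (EuclideanSpace.single k 1)).mul_left)
  rw [integral_add hL hR] at hint0
  have hRR : ∀ x : E3, (∑ k, ∑ i, ∑ j,
      V x k i * pd i (fun y => u y j) x * u x j * pd k η x)
      = ∑ k, (∑ i, ∑ j, V x k i * pd i (fun z => u z j) x * u x j) * pd k η x := by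
    intro x
    refine Finset.sum_congr rfl fun k _ => ?_
    rw [Finset.sum_mul]
    exact Finset.sum_congr rfl fun i _ => (Finset.sum_mul _ _ _).symm
  simp only [hRR]
  linarith
end
end

section
/- Let u, V be smooth on the closed ball B_R ⊂ ℝ³ with u = div V (componentwise uⱼ = ∂ᵢ Vᵢⱼ). Let 0 < ρ < R, s ≥ 2, and let η₁ be a smooth cutoff with η₁ = 1 on B_{(R+ρ)/2}, η₁ = 0 outside B_R, and |∇η₁| ≤ C₀/(R−ρ). Then there is a constant C depending only on C₀ and s such that ‖u η₁‖_{L²(B_R)} ≤ C [ R^{3(s−2)/(4s)} ‖V − (V)_{B_R}‖_{L^s(B_R)}^{1/2} ‖∇u‖_{L²(B_R)}^{1/2} + R^{3(s−2)/(2s)} (R−ρ)^{−1} ‖V − (V)_{B_R}‖_{L^s(B_R)} ]. -/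
open MeasureTheory Real Filter
noncomputable section
/-- The `L^s` norm of the mean oscillation `V - (V)_{B_R}` over the ball `B_R`. -/
def oscNorm (V : E3 → Fin 3 → Fin 3 → ℝ) (s R : ℝ) : ℝ :=
  (∫ x in Metric.ball (0:E3) R, ‖V x - ⨍ y in Metric.ball (0:E3) R, V y‖ ^ s) ^ (1/s)
/-- The local Dirichlet norm `‖∇u‖_{L²(B_R)}`. -/
def gradL2 (u : E3 → E3) (R : ℝ) : ℝ :=
  (∫ x in Metric.ball (0:E3) R, ‖fderiv ℝ u x‖ ^ 2) ^ ((1:ℝ)/2)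

open Metric
section Helpers

lemma norm_sq_eq' (y : E3) : ‖y‖ ^ 2 = ∑ j, (y j) ^ 2 := by
  rw [EuclideanSpace.norm_eq, Real.sq_sqrt (by positivity)]
  simp [sq_abs]

lemma integrableOn_ball_of_continuous {f : E3 → ℝ} (hf : Continuous f) (R : ℝ) :
    IntegrableOn f (Metric.ball (0:E3) R) :=
  (ContinuousOn.integrableOn_compact (isCompact_closedBall _ _) hf.continuousOn).mono_set
    Metric.ball_subset_closedBall

lemma memLp_ball' {f : E3 → ℝ} (hf : Continuous f) (R : ℝ) (p : ENNReal) :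
    MemLp f p (volume.restrict (Metric.ball (0:E3) R)) := by
  haveI : IsFiniteMeasure (volume.restrict (Metric.ball (0:E3) R)) :=
    ⟨by rw [Measure.restrict_apply_univ]; exact measure_ball_lt_top⟩
  obtain ⟨Cb, hCb⟩ := (isCompact_closedBall (0:E3) R).exists_bound_of_continuousOn hf.continuousOn
  exact MemLp.of_bound (hf.aestronglyMeasurable.restrict) Cb
    ((ae_restrict_iff' measurableSet_ball).2
      (ae_of_all _ fun x hx => hCb x (Metric.ball_subset_closedBall hx)))

lemma cauchy_schwarz_ball {f g : E3 → ℝ} (R : ℝ) (hf : Continuous f) (hg : Continuous g)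
    (hf0 : ∀ x, 0 ≤ f x) (hg0 : ∀ x, 0 ≤ g x) :
    ∫ x in Metric.ball (0:E3) R, f x * g x ≤
      (∫ x in Metric.ball (0:E3) R, f x ^ 2) ^ ((1:ℝ)/2) *
        (∫ x in Metric.ball (0:E3) R, g x ^ 2) ^ ((1:ℝ)/2) := by
  have := integral_mul_le_Lp_mul_Lq_of_nonneg (μ := volume.restrict (Metric.ball (0:E3) R))
    (p := 2) (q := 2) (Real.holderConjugate_iff.mpr ⟨one_lt_two, by norm_num⟩)
    (ae_of_all _ hf0) (ae_of_all _ hg0) (memLp_ball' hf R _) (memLp_ball' hg R _)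
  simp only [Real.rpow_two, ← sq] at this
  exact this

lemma sqrt_ineq {X A b : ℝ} (hX : 0 ≤ X) (hA : 0 ≤ A) (hb : 0 ≤ b)
    (h : X ≤ A + b * X ^ ((1:ℝ)/2)) : X ^ ((1:ℝ)/2) ≤ A ^ ((1:ℝ)/2) + b := by
  have ht : 0 ≤ X ^ ((1:ℝ)/2) := Real.rpow_nonneg hX _
  have ha : 0 ≤ A ^ ((1:ℝ)/2) := Real.rpow_nonneg hA _
  have ht2 : (X ^ ((1:ℝ)/2)) ^ 2 = X := by
    rw [← Real.rpow_natCast (X ^ ((1:ℝ)/2)) 2, ← Real.rpow_mul hX]; norm_num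
  have ha2 : (A ^ ((1:ℝ)/2)) ^ 2 = A := by
    rw [← Real.rpow_natCast (A ^ ((1:ℝ)/2)) 2, ← Real.rpow_mul hA]; norm_num
  nlinarith [ht, ha, hb, h, ht2, ha2, sq_nonneg (X ^ ((1:ℝ)/2) - A ^ ((1:ℝ)/2) - b),
    mul_nonneg ht ha]

lemma eta_bound {η₁ : E3 → ℝ} {C₀ ρ R : ℝ} (hρ : 0 < ρ) (hρR : ρ < R)
    (hsm : ContDiff ℝ (⊤ : ℕ∞) η₁)
    (hη1 : ∀ x ∈ Metric.ball (0:E3) ((R+ρ)/2), η₁ x = 1)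
    (hη0 : ∀ x ∉ Metric.ball (0:E3) R, η₁ x = 0)
    (hηd : ∀ x, ‖fderiv ℝ η₁ x‖ ≤ C₀ / (R - ρ)) (hC₀ : 0 < C₀) (x : E3) :
    |η₁ x| ≤ 1 + C₀ / 2 := by
  have hR : 0 < R := hρ.trans hρR
  have hRρ : 0 < R - ρ := sub_pos.2 hρR
  by_cases hx1 : x ∈ Metric.ball (0:E3) ((R+ρ)/2)
  · rw [hη1 x hx1]; simp; positivity
  by_cases hx2 : x ∈ Metric.ball (0:E3) R
  · have hxn : (R+ρ)/2 ≤ ‖x‖ := by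
      have := hx1
      simp only [Metric.mem_ball, dist_zero_right, not_lt] at this
      exact this
    have hxR : ‖x‖ < R := by simpa [Metric.mem_ball, dist_zero_right] using hx2
    have hx0 : 0 < ‖x‖ := lt_of_lt_of_le (by positivity) hxn
    set y : E3 := (R / ‖x‖) • x with hy
    have hyn : ‖y‖ = R := by
      rw [hy, norm_smul, Real.norm_eq_abs, abs_of_pos (by positivity)]
      field_simp
    have hyb : y ∉ Metric.ball (0:E3) R := by
      simp [Metric.mem_ball, dist_zero_right, hyn]
    have hηy : η₁ y = 0 := hη0 y hyb
    have hdist : ‖x - y‖ = R - ‖x‖ := by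
      have : x - y = (1 - R / ‖x‖) • x := by rw [hy]; module
      rw [this, norm_smul, Real.norm_eq_abs, abs_of_nonpos (by
        rw [sub_nonpos]; rw [le_div_iff₀ hx0]; nlinarith)]
      field_simp; ring
    have hmv : ‖η₁ x - η₁ y‖ ≤ (C₀ / (R - ρ)) * ‖x - y‖ := by
      have := Convex.norm_image_sub_le_of_norm_fderiv_le
        (f := η₁) (C := C₀ / (R - ρ)) (s := Set.univ)
        (fun z _ => (hsm.differentiable (by simp)) z) (fun z _ => hηd z)
        convex_univ (Set.mem_univ y) (Set.mem_univ x)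
      simpa [norm_sub_rev] using this
    have h1 : |η₁ x| ≤ (C₀ / (R - ρ)) * (R - ‖x‖) := by
      calc |η₁ x| = ‖η₁ x - η₁ y‖ := by rw [hηy]; simp [Real.norm_eq_abs]
        _ ≤ (C₀ / (R - ρ)) * ‖x - y‖ := hmv
        _ = (C₀ / (R - ρ)) * (R - ‖x‖) := by rw [hdist]
    have h2 : (C₀ / (R - ρ)) * (R - ‖x‖) ≤ C₀ / 2 := by
      have hle : R - ‖x‖ ≤ (R - ρ)/2 := by nlinarith
      have := mul_le_mul_of_nonneg_left hle (le_of_lt (div_pos hC₀ hRρ))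
      calc (C₀ / (R - ρ)) * (R - ‖x‖) ≤ (C₀ / (R - ρ)) * ((R - ρ)/2) := this
        _ = C₀ / 2 := by field_simp
    linarith
  · rw [hη0 x hx2]; simp; positivity

lemma deriv_g_bound {u : E3 → E3} {η₁ : E3 → ℝ} (hu : ContDiff ℝ (⊤ : ℕ∞) u)
    (hη : ContDiff ℝ (⊤ : ℕ∞) η₁) {Mη Cd : ℝ} {x : E3}
    (hMx : |η₁ x| ≤ Mη) (hdx : ‖fderiv ℝ η₁ x‖ ≤ Cd) (i j : Fin 3) :
    |fderiv ℝ (fun y => u y j * η₁ y ^ 2) x (EuclideanSpace.single i (1:ℝ))| ≤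
      Mη ^ 2 * ‖fderiv ℝ u x‖ + 2 * Cd * (‖u x‖ * |η₁ x|) := by
  set e : E3 := EuclideanSpace.single i (1:ℝ) with he
  have hen : ‖e‖ = 1 := by rw [he, EuclideanSpace.norm_single]; norm_num
  have h1 : HasFDerivAt (fun y => u y j)
      ((EuclideanSpace.proj j).comp (fderiv ℝ u x)) x := by
    exact ((EuclideanSpace.proj (𝕜 := ℝ) j).hasFDerivAt).comp x
      ((hu.differentiable (by simp) x).hasFDerivAt)
  have h2 : HasFDerivAt (fun y => η₁ y ^ 2)
      ((η₁ x • fderiv ℝ η₁ x) + (η₁ x • fderiv ℝ η₁ x)) x := by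
    have hd := (hη.differentiable (by simp) x).hasFDerivAt
    have h : HasFDerivAt (fun y => η₁ y * η₁ y) _ x := hd.mul hd
    have heq : (fun y => η₁ y * η₁ y) = fun y => η₁ y ^ 2 := by funext y; ring
    rwa [heq] at h
  have hprod : HasFDerivAt (fun y => u y j * η₁ y ^ 2)
      (u x j • ((η₁ x • fderiv ℝ η₁ x) + (η₁ x • fderiv ℝ η₁ x))
        + η₁ x ^ 2 • ((EuclideanSpace.proj j).comp (fderiv ℝ u x))) x := h1.mul h2
  rw [hprod.fderiv]
  have happ : (u x j • ((η₁ x • fderiv ℝ η₁ x) + (η₁ x • fderiv ℝ η₁ x))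
        + η₁ x ^ 2 • ((EuclideanSpace.proj j).comp (fderiv ℝ u x))) e
      = u x j * (2 * η₁ x * fderiv ℝ η₁ x e) + η₁ x ^ 2 * (fderiv ℝ u x e j) := by
    simp [ContinuousLinearMap.add_apply, ContinuousLinearMap.smul_apply, smul_eq_mul]
    try ring
  rw [happ]
  have b1 : |fderiv ℝ η₁ x e| ≤ Cd := by
    calc |fderiv ℝ η₁ x e| ≤ ‖fderiv ℝ η₁ x‖ * ‖e‖ := (fderiv ℝ η₁ x).le_opNorm e
      _ = ‖fderiv ℝ η₁ x‖ := by rw [hen, mul_one]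
      _ ≤ Cd := hdx
  have b2 : |fderiv ℝ u x e j| ≤ ‖fderiv ℝ u x‖ := by
    calc |fderiv ℝ u x e j| ≤ ‖fderiv ℝ u x e‖ := by
          have h := EuclideanSpace.norm_eq (fderiv ℝ u x e)
          rw [h]
          have h' : |fderiv ℝ u x e j| = Real.sqrt (‖fderiv ℝ u x e j‖ ^ 2) := by
            rw [Real.sqrt_sq_eq_abs]; simp [abs_abs]
          rw [h']
          exact Real.sqrt_le_sqrt (Finset.single_le_sum
            (f := fun k => ‖fderiv ℝ u x e k‖ ^ 2) (fun k _ => sq_nonneg _) (Finset.mem_univ j))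
      _ ≤ ‖fderiv ℝ u x‖ * ‖e‖ := (fderiv ℝ u x).le_opNorm e
      _ = ‖fderiv ℝ u x‖ := by rw [hen, mul_one]
  have b3 : |u x j| ≤ ‖u x‖ := by
    rw [EuclideanSpace.norm_eq]
    have h' : |u x j| = Real.sqrt (‖u x j‖ ^ 2) := by rw [Real.sqrt_sq_eq_abs]; simp [abs_abs]
    rw [h']
    exact Real.sqrt_le_sqrt (Finset.single_le_sum
      (f := fun k => ‖u x k‖ ^ 2) (fun k _ => sq_nonneg _) (Finset.mem_univ j))
  have hM0 : 0 ≤ Mη := le_trans (abs_nonneg _) hMx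
  have hC0 : 0 ≤ Cd := le_trans (norm_nonneg _) hdx
  calc |u x j * (2 * η₁ x * fderiv ℝ η₁ x e) + η₁ x ^ 2 * (fderiv ℝ u x e j)|
      ≤ |u x j * (2 * η₁ x * fderiv ℝ η₁ x e)| + |η₁ x ^ 2 * (fderiv ℝ u x e j)| := abs_add_le _ _
    _ = |u x j| * (2 * |η₁ x| * |fderiv ℝ η₁ x e|) + η₁ x ^ 2 * |fderiv ℝ u x e j| := by
        rw [abs_mul, abs_mul, abs_mul, abs_mul]
        simp [abs_of_nonneg, sq_abs, abs_two]
    _ ≤ ‖u x‖ * (2 * |η₁ x| * Cd) + Mη ^ 2 * ‖fderiv ℝ u x‖ := by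
        have t1 : |u x j| * (2 * |η₁ x| * |fderiv ℝ η₁ x e|) ≤ ‖u x‖ * (2 * |η₁ x| * Cd) := by
          apply mul_le_mul b3 ?_ (by positivity) (norm_nonneg _)
          apply mul_le_mul_of_nonneg_left b1 (by positivity)
        have t2 : η₁ x ^ 2 * |fderiv ℝ u x e j| ≤ Mη ^ 2 * ‖fderiv ℝ u x‖ := by
          apply mul_le_mul ?_ b2 (abs_nonneg _) (by positivity)
          calc η₁ x ^ 2 = |η₁ x| ^ 2 := (sq_abs _).symm
            _ ≤ Mη ^ 2 := by apply pow_le_pow_left₀ (abs_nonneg _) hMx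
        linarith
    _ = Mη ^ 2 * ‖fderiv ℝ u x‖ + 2 * Cd * (‖u x‖ * |η₁ x|) := by ring

lemma holder_ball {F : E3 → ℝ} (hF : Continuous F) (hF0 : ∀ x, 0 ≤ F x) {s R : ℝ}
    (hs : 2 ≤ s) (hR : 0 < R) :
    (∫ x in Metric.ball (0:E3) R, F x ^ 2) ^ ((1:ℝ)/2) ≤
      ((volume (Metric.ball (0:E3) 1)).toReal) ^ ((s-2)/(2*s)) * R ^ (3*(s-2)/(2*s)) *
        (∫ x in Metric.ball (0:E3) R, F x ^ s) ^ (1/s) := by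
  have hs0 : (0:ℝ) < s := lt_of_lt_of_le two_pos hs
  set K := (volume (Metric.ball (0:E3) 1)).toReal with hK
  have hK0 : 0 < K := by
    refine ENNReal.toReal_pos (measure_ball_pos _ _ one_pos).ne' measure_ball_lt_top.ne
  rcases eq_or_lt_of_le hs with heq | hlt
  · subst heq
    have e1 : ((2:ℝ)-2)/(2*2) = 0 := by norm_num
    have e2 : 3*((2:ℝ)-2)/(2*2) = 0 := by norm_num
    have hpt : ∀ x : E3, F x ^ (2:ℝ) = F x ^ (2:ℕ) := fun x => by
      rw [← Real.rpow_natCast (F x) 2]; norm_num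
    rw [e1, e2, Real.rpow_zero, Real.rpow_zero, one_mul, one_mul]
    simp only [hpt]
    norm_num
  · have hs2 : (0:ℝ) < s - 2 := by linarith
    have hpq : Real.HolderConjugate (s/2) (s/(s-2)) := by
      rw [Real.holderConjugate_iff]
      constructor
      · rw [lt_div_iff₀ (by norm_num : (0:ℝ) < 2)]; linarith
      · field_simp; ring
    have hIs0 : 0 ≤ ∫ x in Metric.ball (0:E3) R, F x ^ s :=
      setIntegral_nonneg measurableSet_ball fun x _ => Real.rpow_nonneg (hF0 x) s
    have hI20 : 0 ≤ ∫ x in Metric.ball (0:E3) R, F x ^ 2 :=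
      setIntegral_nonneg measurableSet_ball fun x _ => sq_nonneg _
    have happ := integral_mul_le_Lp_mul_Lq_of_nonneg
      (μ := volume.restrict (Metric.ball (0:E3) R))
      hpq (f := fun x => F x ^ (2:ℕ)) (g := fun _ => (1:ℝ))
      (ae_of_all _ fun x => sq_nonneg _) (ae_of_all _ fun _ => zero_le_one)
      (memLp_ball' (hF.pow 2) R _) (memLp_ball' continuous_const R _)
    simp only [mul_one, Real.one_rpow] at happ
    have hF2s : ∀ x : E3, (F x ^ (2:ℕ)) ^ (s/2 : ℝ) = F x ^ s := fun x => by
      rw [← Real.rpow_natCast (F x) 2, ← Real.rpow_mul (hF0 x)]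
      congr 1
      ring
    simp only [hF2s] at happ
    have hconst : ∫ _x in Metric.ball (0:E3) R, (1:ℝ) = (volume (Metric.ball (0:E3) R)).toReal := by
      simp only [setIntegral_const, smul_eq_mul, mul_one, Measure.real]
    rw [hconst] at happ
    have hvol : (volume (Metric.ball (0:E3) R)).toReal = R ^ (3:ℕ) * K := by
      have h := Measure.addHaar_ball (volume : Measure E3) (0:E3) hR.le
      rw [finrank_euclideanSpace_fin] at h
      rw [h, ENNReal.toReal_mul, ENNReal.toReal_ofReal (by positivity)]
    rw [hvol] at happ
    have hq1 : 1/(s/2) = 2/s := by rw [one_div_div]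
    have hq2 : 1/(s/(s-2)) = (s-2)/s := by rw [one_div_div]
    rw [hq1, hq2] at happ
    have hmono := Real.rpow_le_rpow hI20 happ (by norm_num : (0:ℝ) ≤ 1/2)
    have hR3K : (0:ℝ) ≤ R ^ (3:ℕ) * K := by positivity
    calc (∫ x in Metric.ball (0:E3) R, F x ^ 2) ^ ((1:ℝ)/2)
        ≤ ((∫ x in Metric.ball (0:E3) R, F x ^ s) ^ (2/s) * (R ^ (3:ℕ) * K) ^ ((s-2)/s)) ^ ((1:ℝ)/2) := hmono
      _ = (∫ x in Metric.ball (0:E3) R, F x ^ s) ^ (1/s) * (R ^ (3:ℕ) * K) ^ ((s-2)/(2*s)) := by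
          rw [Real.mul_rpow (Real.rpow_nonneg hIs0 _) (Real.rpow_nonneg hR3K _),
            ← Real.rpow_mul hIs0, ← Real.rpow_mul hR3K]
          congr 1
          · congr 1; ring
          · congr 1; ring
      _ = (∫ x in Metric.ball (0:E3) R, F x ^ s) ^ (1/s) * (R ^ (3*(s-2)/(2*s)) * K ^ ((s-2)/(2*s))) := by
          have h3 : ((R:ℝ) ^ (3:ℕ)) ^ ((s-2)/(2*s)) = R ^ (3*(s-2)/(2*s)) := by
            rw [← Real.rpow_natCast R 3, ← Real.rpow_mul hR.le]
            congr 1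
            push_cast
            ring
          congr 1
          rw [Real.mul_rpow (by positivity) hK0.le, h3]
      _ = K ^ ((s-2)/(2*s)) * R ^ (3*(s-2)/(2*s)) * (∫ x in Metric.ball (0:E3) R, F x ^ s) ^ (1/s) := by
          ring

lemma ibp_identity {u : E3 → E3} {V : E3 → Fin 3 → Fin 3 → ℝ} {η₁ : E3 → ℝ} {R : ℝ}
    (hu : ContDiff ℝ (⊤ : ℕ∞) u) (hV : ContDiff ℝ (⊤ : ℕ∞) V) (hη : ContDiff ℝ (⊤ : ℕ∞) η₁)
    (hη0 : ∀ x ∉ Metric.ball (0:E3) R, η₁ x = 0)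
    (hdiv : ∀ x j, ∑ i, fderiv ℝ (fun y => V y i j) x (EuclideanSpace.single i (1:ℝ)) = u x j)
    (c : Fin 3 → Fin 3 → ℝ) :
    ∫ x in Metric.ball (0:E3) R, ‖u x‖ ^ 2 * η₁ x ^ 2 =
      - ∫ x, ∑ j, ∑ i, (V x i j - c i j) *
          fderiv ℝ (fun y => u y j * η₁ y ^ 2) x (EuclideanSpace.single i (1:ℝ)) := by
  set e : Fin 3 → E3 := fun i => EuclideanSpace.single i (1:ℝ) with hedef
  set g : Fin 3 → E3 → ℝ := fun j x => u x j * η₁ x ^ 2 with hgdef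
  have hVij : ∀ i j, ContDiff ℝ (⊤ : ℕ∞) (fun y => V y i j) := fun i j =>
    contDiff_pi.1 (contDiff_pi.1 hV i) j
  have huj : ∀ j, ContDiff ℝ (⊤ : ℕ∞) (fun y => u y j) := fun j => by
    have := (EuclideanSpace.proj (𝕜 := ℝ) (ι := Fin 3) j).contDiff.comp hu
    exact this
  have hgsm : ∀ j, ContDiff ℝ (⊤ : ℕ∞) (g j) := fun j => (huj j).mul (hη.pow 2)
  have hgsupp : ∀ j, HasCompactSupport (g j) := fun j => by
    apply HasCompactSupport.intro (isCompact_closedBall (0:E3) R)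
    intro x hx
    have : η₁ x = 0 := hη0 x (fun hb => hx (Metric.ball_subset_closedBall hb))
    simp [hgdef, this]
  have hdg_supp : ∀ i j, HasCompactSupport (fun x => fderiv ℝ (g j) x (e i)) := fun i j => by
    have h1 : HasCompactSupport (fderiv ℝ (g j)) := (hgsupp j).fderiv (𝕜 := ℝ)
    exact h1.comp_left (g := fun L : E3 →L[ℝ] ℝ => L (e i)) rfl
  have hdg_cont : ∀ i j, Continuous (fun x => fderiv ℝ (g j) x (e i)) := fun i j =>
    ((ContinuousLinearMap.apply ℝ ℝ (e i)).continuous).comp ((hgsm j).continuous_fderiv (by simp))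
  have hWc : ∀ i j, Continuous (fun x => V x i j - c i j) := fun i j =>
    ((hVij i j).continuous).sub continuous_const
  have hdVc : ∀ i j, Continuous (fun x => fderiv ℝ (fun y => V y i j) x (e i)) := fun i j =>
    ((ContinuousLinearMap.apply ℝ ℝ (e i)).continuous).comp ((hVij i j).continuous_fderiv (by simp))
  have int_φ : ∀ i j, Integrable (fun x => fderiv ℝ (fun y => V y i j) x (e i) * g j x) :=
    fun i j => Continuous.integrable_of_hasCompactSupport
      ((hdVc i j).mul ((hgsm j).continuous)) ((hgsupp j).mul_left)
  have int_Wdg : ∀ i j, Integrable (fun x => (V x i j - c i j) * fderiv ℝ (g j) x (e i)) :=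
    fun i j => Continuous.integrable_of_hasCompactSupport
      ((hWc i j).mul (hdg_cont i j)) ((hdg_supp i j).mul_left)
  have int_Wg : ∀ i j, Integrable (fun x => (V x i j - c i j) * g j x) :=
    fun i j => Continuous.integrable_of_hasCompactSupport
      ((hWc i j).mul ((hgsm j).continuous)) ((hgsupp j).mul_left)
  have ibp : ∀ i j, ∫ x, fderiv ℝ (fun y => V y i j) x (e i) * g j x =
      - ∫ x, (V x i j - c i j) * fderiv ℝ (g j) x (e i) := by
    intro i j
    have key := integral_mul_fderiv_eq_neg_fderiv_mul_of_integrable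
      (f := fun y => V y i j - c i j) (g := g j) (v := e i) (μ := volume)
      (by simpa only [fderiv_sub_const] using int_φ i j)
      (int_Wdg i j) (int_Wg i j)
      (fun x _ => (((hVij i j).differentiable (by simp)).sub_const _) x)
      (fun x _ => (hgsm j).differentiable (by simp) x)
    simp only [fderiv_sub_const] at key
    linarith [key]
  have hpt : ∀ x, ‖u x‖ ^ 2 * η₁ x ^ 2 =
      ∑ j, ∑ i, fderiv ℝ (fun y => V y i j) x (e i) * g j x := by
    intro x
    rw [norm_sq_eq' (u x), Finset.sum_mul]
    apply Finset.sum_congr rfl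
    intro j _
    rw [← Finset.sum_mul, hdiv x j]
    simp only [hgdef]
    ring
  have step1 : ∫ x in Metric.ball (0:E3) R, ‖u x‖ ^ 2 * η₁ x ^ 2 = ∫ x, ‖u x‖ ^ 2 * η₁ x ^ 2 :=
    setIntegral_eq_integral_of_forall_compl_eq_zero (fun x hx => by rw [hη0 x hx]; ring)
  rw [step1]
  calc ∫ x, ‖u x‖ ^ 2 * η₁ x ^ 2
      = ∫ x, ∑ j, ∑ i, fderiv ℝ (fun y => V y i j) x (e i) * g j x := by
        congr 1; funext x; exact hpt x
    _ = ∑ j, ∑ i, ∫ x, fderiv ℝ (fun y => V y i j) x (e i) * g j x := by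
        rw [integral_finset_sum _ (fun j _ => integrable_finset_sum _ (fun i _ => int_φ i j))]
        exact Finset.sum_congr rfl fun j _ => integral_finset_sum _ (fun i _ => int_φ i j)
    _ = ∑ j, ∑ i, - ∫ x, (V x i j - c i j) * fderiv ℝ (g j) x (e i) := by
        exact Finset.sum_congr rfl fun j _ => Finset.sum_congr rfl fun i _ => ibp i j
    _ = - ∑ j, ∑ i, ∫ x, (V x i j - c i j) * fderiv ℝ (g j) x (e i) := by
        simp
    _ = - ∫ x, ∑ j, ∑ i, (V x i j - c i j) * fderiv ℝ (g j) x (e i) := by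
        congr 1
        rw [integral_finset_sum _ (fun j _ => integrable_finset_sum _ (fun i _ => int_Wdg i j))]
        exact Finset.sum_congr rfl fun j _ => (integral_finset_sum _ (fun i _ => int_Wdg i j)).symm

end Helpers

set_option maxHeartbeats 1000000 in
theorem stmt_7 (C₀ s : ℝ) (hC₀ : 0 < C₀) (hs : 2 ≤ s) :
    ∃ C : ℝ, 0 < C ∧
      ∀ (u : E3 → E3) (V : E3 → Fin 3 → Fin 3 → ℝ) (η₁ : E3 → ℝ) (ρ R : ℝ),
        0 < ρ → ρ < R →
        ContDiff ℝ (⊤ : ℕ∞) u → ContDiff ℝ (⊤ : ℕ∞) V →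
        (∀ x j, ∑ i, pd i (fun y => V y i j) x = u x j) →
        ContDiff ℝ (⊤ : ℕ∞) η₁ →
        (∀ x ∈ Metric.ball (0:E3) ((R+ρ)/2), η₁ x = 1) →
        (∀ x ∉ Metric.ball (0:E3) R, η₁ x = 0) →
        (∀ x, ‖fderiv ℝ η₁ x‖ ≤ C₀ / (R - ρ)) →
        (∫ x in Metric.ball (0:E3) R, ‖u x‖ ^ 2 * η₁ x ^ 2) ^ ((1:ℝ)/2) ≤
          C * (R ^ (3*(s-2)/(4*s)) * (oscNorm V s R) ^ ((1:ℝ)/2) * (gradL2 u R) ^ ((1:ℝ)/2)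
            + R ^ (3*(s-2)/(2*s)) * (R - ρ)⁻¹ * oscNorm V s R) := by
  have hK0 : 0 < (volume (Metric.ball (0:E3) 1)).toReal :=
    ENNReal.toReal_pos (measure_ball_pos _ _ one_pos).ne' measure_ball_lt_top.ne
  set K : ℝ := (volume (Metric.ball (0:E3) 1)).toReal with hKdef
  set K' : ℝ := K ^ ((s-2)/(2*s)) with hK'def
  have hK'0 : 0 < K' := Real.rpow_pos_of_pos hK0 _
  set Mc : ℝ := 1 + C₀/2 with hMcdef
  have hMc0 : 0 < Mc := by positivity
  refine ⟨3*Mc*K' ^ ((1:ℝ)/2) + 18*C₀*K' + 1, by positivity, ?_⟩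
  intro u V η₁ ρ R hρ hρR hu hV hdiv hη hη1 hη0 hηd
  have hR : 0 < R := hρ.trans hρR
  have hRρ : 0 < R - ρ := sub_pos.2 hρR
  set Cd : ℝ := C₀ / (R - ρ) with hCddef
  have hCd0 : 0 < Cd := div_pos hC₀ hRρ
  set c : Fin 3 → Fin 3 → ℝ := ⨍ y in Metric.ball (0:E3) R, V y with hcdef
  set e : Fin 3 → E3 := fun i => EuclideanSpace.single i (1:ℝ) with hedef
  -- continuity facts
  have hcW : Continuous (fun x => ‖V x - c‖) := (hV.continuous.sub continuous_const).norm
  have hcDu : Continuous (fun x => ‖fderiv ℝ u x‖) := (hu.continuous_fderiv (by simp)).norm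
  have hcu : Continuous (fun x => ‖u x‖) := hu.continuous.norm
  have hcη : Continuous (fun x => |η₁ x|) := hη.continuous.abs
  have hηM : ∀ x, |η₁ x| ≤ Mc := fun x => eta_bound hρ hρR hη hη1 hη0 hηd hC₀ x
  -- the identity
  have hdiv' : ∀ x j, ∑ i, fderiv ℝ (fun y => V y i j) x (EuclideanSpace.single i (1:ℝ)) = u x j :=
    hdiv
  have hident := ibp_identity hu hV hη hη0 hdiv' c
  set X := ∫ x in Metric.ball (0:E3) R, ‖u x‖ ^ 2 * η₁ x ^ 2 with hXdef
  set h : E3 → ℝ := fun x => ∑ j, ∑ i, (V x i j - c i j) *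
      fderiv ℝ (fun y => u y j * η₁ y ^ 2) x (e i) with hhdef
  have hX_eq : X = - ∫ x, h x := hident
  -- support and continuity of h
  have hVij : ∀ i j : Fin 3, ContDiff ℝ (⊤ : ℕ∞) (fun y : E3 => V y i j) := fun i j =>
    contDiff_pi.1 (contDiff_pi.1 hV i) j
  have huj : ∀ j : Fin 3, ContDiff ℝ (⊤ : ℕ∞) (fun y : E3 => u y j) := fun j => by
    have := (EuclideanSpace.proj (𝕜 := ℝ) (ι := Fin 3) j).contDiff.comp hu
    exact this
  have hgsm : ∀ j : Fin 3, ContDiff ℝ (⊤ : ℕ∞) (fun x : E3 => u x j * η₁ x ^ 2) := fun j =>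
    (huj j).mul (hη.pow 2)
  have hdg_cont : ∀ i j : Fin 3,
      Continuous (fun x => fderiv ℝ (fun y => u y j * η₁ y ^ 2) x (e i)) := fun i j =>
    ((ContinuousLinearMap.apply ℝ ℝ (e i)).continuous).comp ((hgsm j).continuous_fderiv (by simp))
  have hWijc : ∀ i j : Fin 3, Continuous (fun x => V x i j - c i j) := fun i j =>
    ((hVij i j).continuous).sub continuous_const
  have hh_cont : Continuous h := by
    rw [hhdef]
    exact continuous_finset_sum _ (fun j _ => continuous_finset_sum _ (fun i _ =>
      (hWijc i j).mul (hdg_cont i j)))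
  have hvanish : ∀ x ∉ Metric.closedBall (0:E3) R, h x = 0 := by
    intro x hx
    have hfz : ∀ j : Fin 3, fderiv ℝ (fun y => u y j * η₁ y ^ 2) x = 0 := by
      intro j
      have hts : tsupport (fun y : E3 => u y j * η₁ y ^ 2) ⊆ Metric.closedBall (0:E3) R := by
        apply closure_minimal ?_ Metric.isClosed_closedBall
        intro z hz
        by_contra hzb
        have : η₁ z = 0 := hη0 z (fun hb => hzb (Metric.ball_subset_closedBall hb))
        apply hz
        simp [this]
      by_contra h0
      exact hx (hts (support_fderiv_subset ℝ (Function.mem_support.2 h0)))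
    simp [hhdef, hfz]
  have hh_supp : HasCompactSupport h :=
    HasCompactSupport.intro (isCompact_closedBall (0:E3) R) hvanish
  have hh_int : Integrable h := hh_cont.integrable_of_hasCompactSupport hh_supp
  have step2 : X ≤ ∫ x, |h x| := by
    rw [hX_eq]
    calc -∫ x, h x ≤ |∫ x, h x| := neg_le_abs _
      _ ≤ ∫ x, |h x| := by
          simpa [Real.norm_eq_abs] using norm_integral_le_integral_norm (μ := volume) h
  have step3 : ∫ x, |h x| = ∫ x in Metric.ball (0:E3) R, |h x| := by
    rw [← setIntegral_eq_integral_of_forall_compl_eq_zero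
      (s := Metric.closedBall (0:E3) R) (f := fun x => |h x|)
      (fun x hx => by show |h x| = 0; rw [hvanish x hx]; simp)]
    apply setIntegral_congr_set
    rw [MeasureTheory.ae_eq_set]
    constructor
    · rw [Metric.closedBall_diff_ball]
      exact Measure.addHaar_sphere _ _ _
    · rw [Set.diff_eq_empty.2 Metric.ball_subset_closedBall]
      exact measure_empty
  set ψ : E3 → ℝ := fun x => 9*Mc^2*(‖V x - c‖*‖fderiv ℝ u x‖)
      + 18*Cd*(‖V x - c‖*(‖u x‖*|η₁ x|)) with hψdef
  have hψcont : Continuous ψ := by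
    rw [hψdef]
    exact (continuous_const.mul (hcW.mul hcDu)).add
      (continuous_const.mul (hcW.mul (hcu.mul hcη)))
  have hpt_bound : ∀ x, |h x| ≤ ψ x := by
    intro x
    have hb : ∀ i j : Fin 3,
        |(V x i j - c i j) * fderiv ℝ (fun y => u y j * η₁ y ^ 2) x (e i)| ≤
          ‖V x - c‖ * (Mc^2*‖fderiv ℝ u x‖ + 2*Cd*(‖u x‖*|η₁ x|)) := by
      intro i j
      rw [abs_mul]
      apply mul_le_mul ?_ (deriv_g_bound hu hη (hηM x) (hηd x) i j) (abs_nonneg _) (norm_nonneg _)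
      have h1 : |V x i j - c i j| = ‖(V x - c) i j‖ := rfl
      rw [h1]
      exact le_trans (norm_le_pi_norm ((V x - c) i) j) (norm_le_pi_norm (V x - c) i)
    calc |h x| ≤ ∑ j : Fin 3, |∑ i : Fin 3, (V x i j - c i j) *
            fderiv ℝ (fun y => u y j * η₁ y ^ 2) x (e i)| := by
          rw [hhdef]; exact Finset.abs_sum_le_sum_abs _ _
      _ ≤ ∑ _j : Fin 3, ∑ _i : Fin 3,
            ‖V x - c‖ * (Mc^2*‖fderiv ℝ u x‖ + 2*Cd*(‖u x‖*|η₁ x|)) := by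
          apply Finset.sum_le_sum
          intro j _
          calc |∑ i : Fin 3, (V x i j - c i j) *
                  fderiv ℝ (fun y => u y j * η₁ y ^ 2) x (e i)|
              ≤ ∑ i : Fin 3, |(V x i j - c i j) *
                  fderiv ℝ (fun y => u y j * η₁ y ^ 2) x (e i)| :=
                Finset.abs_sum_le_sum_abs _ _
            _ ≤ ∑ _i : Fin 3, ‖V x - c‖ * (Mc^2*‖fderiv ℝ u x‖ + 2*Cd*(‖u x‖*|η₁ x|)) :=
                Finset.sum_le_sum (fun i _ => hb i j)
      _ = ψ x := by
          simp [Finset.sum_const, hψdef]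
          ring
  have step4 : ∫ x in Metric.ball (0:E3) R, |h x| ≤ ∫ x in Metric.ball (0:E3) R, ψ x :=
    setIntegral_mono_on (integrableOn_ball_of_continuous hh_cont.abs R)
      (integrableOn_ball_of_continuous hψcont R) measurableSet_ball (fun x _ => hpt_bound x)
  set T1 := ∫ x in Metric.ball (0:E3) R, ‖V x - c‖*‖fderiv ℝ u x‖ with hT1def
  set T2 := ∫ x in Metric.ball (0:E3) R, ‖V x - c‖*(‖u x‖*|η₁ x|) with hT2def
  have i1 : IntegrableOn (fun x => ‖V x - c‖*‖fderiv ℝ u x‖) (Metric.ball (0:E3) R) :=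
    integrableOn_ball_of_continuous (hcW.mul hcDu) R
  have i2 : IntegrableOn (fun x => ‖V x - c‖*(‖u x‖*|η₁ x|)) (Metric.ball (0:E3) R) :=
    integrableOn_ball_of_continuous (hcW.mul (hcu.mul hcη)) R
  have step5 : ∫ x in Metric.ball (0:E3) R, ψ x = 9*Mc^2*T1 + 18*Cd*T2 := by
    rw [hψdef, integral_add (i1.const_mul _) (i2.const_mul _), integral_const_mul,
      integral_const_mul]
  set Y := (∫ x in Metric.ball (0:E3) R, ‖V x - c‖ ^ 2) ^ ((1:ℝ)/2) with hYdef
  have hX0 : 0 ≤ X := setIntegral_nonneg measurableSet_ball (fun x _ => by positivity)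
  have hXr0 : 0 ≤ X ^ ((1:ℝ)/2) := Real.rpow_nonneg hX0 _
  have hY0 : 0 ≤ Y :=
    Real.rpow_nonneg (setIntegral_nonneg measurableSet_ball (fun x _ => by positivity)) _
  have hD0 : 0 ≤ gradL2 u R :=
    Real.rpow_nonneg (setIntegral_nonneg measurableSet_ball fun x _ => sq_nonneg _) _
  have hOs0 : 0 ≤ oscNorm V s R :=
    Real.rpow_nonneg (setIntegral_nonneg measurableSet_ball fun x _ =>
      Real.rpow_nonneg (norm_nonneg _) _) _
  have hT1le : T1 ≤ Y * gradL2 u R := by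
    have hcs := cauchy_schwarz_ball R hcW hcDu (fun x => norm_nonneg _) (fun x => norm_nonneg _)
    rw [hT1def, gradL2]
    exact hcs
  have hsqX : (∫ x in Metric.ball (0:E3) R, (‖u x‖*|η₁ x|)^2) = X := by
    rw [hXdef]
    congr 1
    funext x
    rw [mul_pow, sq_abs]
  have hT2le : T2 ≤ Y * X ^ ((1:ℝ)/2) := by
    have hcs := cauchy_schwarz_ball (g := fun x => ‖u x‖ * |η₁ x|) R hcW (hcu.mul hcη)
      (fun x => norm_nonneg _) (fun x => mul_nonneg (norm_nonneg _) (abs_nonneg _))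
    rw [hsqX] at hcs
    exact hcs
  set Z : ℝ := K' * R ^ (3*(s-2)/(2*s)) * oscNorm V s R with hZdef
  have hZ0 : 0 ≤ Z := by
    apply mul_nonneg (mul_nonneg hK'0.le (Real.rpow_nonneg hR.le _)) hOs0
  have hYle : Y ≤ Z := by
    have hhold := holder_ball hcW (fun x => norm_nonneg _) hs hR
    have hosc : oscNorm V s R = (∫ x in Metric.ball (0:E3) R, ‖V x - c‖ ^ s) ^ (1/s) := by
      rw [oscNorm, ← hcdef]
    calc Y ≤ (volume (Metric.ball (0:E3) 1)).toReal ^ ((s-2)/(2*s)) * R ^ (3*(s-2)/(2*s)) *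
          (∫ x in Metric.ball (0:E3) R, ‖V x - c‖ ^ s) ^ (1/s) := hhold
      _ = Z := by rw [hZdef, hK'def, hKdef, hosc]
  -- the quadratic inequality
  have hchain : X ≤ 9*Mc^2*(Z*gradL2 u R) + (18*Cd*Z) * X ^ ((1:ℝ)/2) := by
    have c1 : X ≤ 9*Mc^2*T1 + 18*Cd*T2 := by
      calc X ≤ ∫ x, |h x| := step2
        _ = ∫ x in Metric.ball (0:E3) R, |h x| := step3
        _ ≤ ∫ x in Metric.ball (0:E3) R, ψ x := step4
        _ = 9*Mc^2*T1 + 18*Cd*T2 := step5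
    have d1 : Y * gradL2 u R ≤ Z * gradL2 u R := mul_le_mul_of_nonneg_right hYle hD0
    have d2 : Y * X ^ ((1:ℝ)/2) ≤ Z * X ^ ((1:ℝ)/2) := mul_le_mul_of_nonneg_right hYle hXr0
    have e1 : T1 ≤ Z * gradL2 u R := le_trans hT1le d1
    have e2 : T2 ≤ Z * X ^ ((1:ℝ)/2) := le_trans hT2le d2
    have f1 : 9*Mc^2*T1 ≤ 9*Mc^2*(Z*gradL2 u R) :=
      mul_le_mul_of_nonneg_left e1 (by positivity)
    have f2 : 18*Cd*T2 ≤ 18*Cd*(Z*X ^ ((1:ℝ)/2)) :=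
      mul_le_mul_of_nonneg_left e2 (by positivity)
    have f2' : 18*Cd*T2 ≤ 18*Cd*Z * X ^ ((1:ℝ)/2) := by
      calc 18*Cd*T2 ≤ 18*Cd*(Z*X ^ ((1:ℝ)/2)) := f2
        _ = 18*Cd*Z * X ^ ((1:ℝ)/2) := by ring
    exact le_trans c1 (add_le_add f1 f2')
  have hkey := sqrt_ineq hX0 (by positivity : (0:ℝ) ≤ 9*Mc^2*(Z*gradL2 u R))
    (by positivity : (0:ℝ) ≤ 18*Cd*Z) hchain
  -- compute the square root of A
  have hA_eq : 9*Mc^2*(Z*gradL2 u R) = (3*Mc)^2*(Z*gradL2 u R) := by ring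
  have hA_half : (9*Mc^2*(Z*gradL2 u R)) ^ ((1:ℝ)/2) =
      3*Mc*(K'^((1:ℝ)/2) * R^(3*(s-2)/(4*s)) * (oscNorm V s R)^((1:ℝ)/2))
        * (gradL2 u R)^((1:ℝ)/2) := by
    rw [hA_eq]
    rw [Real.mul_rpow (by positivity) (mul_nonneg hZ0 hD0)]
    rw [Real.mul_rpow hZ0 hD0]
    have hsq : ((3*Mc)^2 : ℝ) ^ ((1:ℝ)/2) = 3*Mc := by
      rw [← Real.rpow_natCast (3*Mc) 2, ← Real.rpow_mul (by positivity)]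
      norm_num
    rw [hsq]
    have hZhalf : Z ^ ((1:ℝ)/2) =
        K'^((1:ℝ)/2) * R^(3*(s-2)/(4*s)) * (oscNorm V s R)^((1:ℝ)/2) := by
      rw [hZdef, Real.mul_rpow (mul_nonneg hK'0.le (Real.rpow_nonneg hR.le _)) hOs0,
        Real.mul_rpow hK'0.le (Real.rpow_nonneg hR.le _)]
      congr 2
      rw [← Real.rpow_mul hR.le]
      congr 1
      ring
    rw [hZhalf]
    ring
  rw [hA_half] at hkey
  -- final assembly
  have hb_eq : 18*Cd*Z = 18*C₀*K' * (R ^ (3*(s-2)/(2*s)) * (R-ρ)⁻¹ * oscNorm V s R) := by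
    rw [hCddef, hZdef]
    field_simp
  rw [hb_eq] at hkey
  set t1 : ℝ := R ^ (3*(s-2)/(4*s)) * (oscNorm V s R) ^ ((1:ℝ)/2) * (gradL2 u R) ^ ((1:ℝ)/2)
    with ht1def
  set t2 : ℝ := R ^ (3*(s-2)/(2*s)) * (R - ρ)⁻¹ * oscNorm V s R with ht2def
  have ht10 : 0 ≤ t1 := by
    apply mul_nonneg (mul_nonneg (Real.rpow_nonneg hR.le _) (Real.rpow_nonneg hOs0 _))
      (Real.rpow_nonneg hD0 _)
  have ht20 : 0 ≤ t2 := by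
    apply mul_nonneg (mul_nonneg (Real.rpow_nonneg hR.le _) (by positivity)) hOs0
  have hstep : 3*Mc*(K'^((1:ℝ)/2) * R^(3*(s-2)/(4*s)) * (oscNorm V s R)^((1:ℝ)/2))
        * (gradL2 u R)^((1:ℝ)/2) + 18*C₀*K' * t2
      ≤ (3*Mc*K' ^ ((1:ℝ)/2) + 18*C₀*K' + 1) * (t1 + t2) := by
    have hre : 3*Mc*(K'^((1:ℝ)/2) * R^(3*(s-2)/(4*s)) * (oscNorm V s R)^((1:ℝ)/2))
        * (gradL2 u R)^((1:ℝ)/2) = (3*Mc*K'^((1:ℝ)/2)) * t1 := by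
      rw [ht1def]; ring
    rw [hre]
    have ha1 : 0 ≤ 3*Mc*K'^((1:ℝ)/2) := by positivity
    have ha2 : 0 ≤ 18*C₀*K' := by positivity
    have hexp : (3*Mc*K' ^ ((1:ℝ)/2) + 18*C₀*K' + 1) * (t1 + t2) =
        (3*Mc*K'^((1:ℝ)/2))*t1 + (18*C₀*K')*t2
          + ((3*Mc*K'^((1:ℝ)/2))*t2 + (18*C₀*K')*t1 + t1 + t2) := by ring
    have hx1 : 0 ≤ (3*Mc*K'^((1:ℝ)/2))*t2 := mul_nonneg ha1 ht20
    have hx2 : 0 ≤ (18*C₀*K')*t1 := mul_nonneg ha2 ht10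
    rw [hexp]
    linarith [hx1, hx2, ht10, ht20]
  calc X ^ ((1:ℝ)/2)
      ≤ 3*Mc*(K'^((1:ℝ)/2) * R^(3*(s-2)/(4*s)) * (oscNorm V s R)^((1:ℝ)/2))
          * (gradL2 u R)^((1:ℝ)/2) + 18*C₀*K' * t2 := hkey
    _ ≤ (3*Mc*K' ^ ((1:ℝ)/2) + 18*C₀*K' + 1) * (t1 + t2) := hstep
end
end

section
/- Let u be a constant vector field u ≡ u₀ on ℝ³, and suppose u = div V for a smooth matrix potential V satisfying ‖V − (V)_{B_R}‖_{L^s(B_R)} ≤ C R^{(s+6)/(3s)} (log R)^{(s−3)/(3s)} for all R > 2, where s ∈ (3,6]. Then u₀ = 0. -/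
open MeasureTheory Real Filter
noncomputable section
open Set

lemma pi3_coord_le_norm (v : Fin 3 → ℝ) (i : Fin 3) : |v i| ≤ ‖v‖ := by
  simpa using norm_le_pi_norm v i

lemma div_integral_zero_pi (f : Fin 3 → (Fin 3 → ℝ) → ℝ)
    (hf : ∀ i, ContDiff ℝ 1 (f i)) (hsupp : ∀ i, HasCompactSupport (f i)) :
    ∫ x : Fin 3 → ℝ, ∑ i, fderiv ℝ (f i) x (Pi.single i 1) = 0 := by
  obtain ⟨r, hr0, hr⟩ : ∃ r : ℝ, 0 < r ∧ ∀ i, tsupport (f i) ⊆ Metric.ball 0 r := by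
    have : IsCompact (⋃ i, tsupport (f i)) := isCompact_iUnion fun i => hsupp i
    obtain ⟨r, hrb⟩ := this.isBounded.subset_ball 0
    exact ⟨max r 1, lt_of_lt_of_le one_pos (le_max_right _ _),
      fun i => (subset_iUnion (fun i => tsupport (f i)) i |>.trans hrb).trans
        (Metric.ball_subset_ball (le_max_left _ _))⟩
  have hzero : ∀ (i : Fin 3) (v : Fin 3 → ℝ), r ≤ |v i| → f i v = 0 := by
    intro i v hv
    apply image_eq_zero_of_notMem_tsupport
    intro hmem
    have h1 := hr i hmem
    rw [Metric.mem_ball, dist_zero_right] at h1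
    exact absurd (hv.trans (pi3_coord_le_norm v i)) (not_le.2 h1)
  set a : Fin 3 → ℝ := fun _ => -r with ha
  set b : Fin 3 → ℝ := fun _ => r with hb
  have hle : a ≤ b := fun i => by simp only [ha, hb]; linarith
  have key := MeasureTheory.integral_divergence_of_hasFDerivAt_off_countable' a b hle
    f (fun i x => fderiv ℝ (f i) x) ∅ Set.countable_empty
    (fun i => ((hf i).continuous).continuousOn)
    (fun x _ i => (((hf i).differentiable one_ne_zero) x).hasFDerivAt)
    (by
      apply ContinuousOn.integrableOn_compact isCompact_Icc
      apply Continuous.continuousOn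
      exact continuous_finset_sum _ fun i _ =>
        ((hf i).continuous_fderiv one_ne_zero).clm_apply continuous_const)
  have heq : (∫ x : Fin 3 → ℝ, ∑ i, fderiv ℝ (f i) x (Pi.single i 1))
      = ∫ x in Set.Icc a b, ∑ i, fderiv ℝ (f i) x (Pi.single i 1) := by
    symm
    apply setIntegral_eq_integral_of_forall_compl_eq_zero
    intro x hx
    apply Finset.sum_eq_zero
    intro i _
    have hxt : x ∉ tsupport (f i) := by
      intro hmem
      apply hx
      have hn := hr i hmem
      rw [Metric.mem_ball, dist_zero_right] at hn
      refine Set.mem_Icc.2 ⟨fun k => ?_, fun k => ?_⟩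
      · exact (neg_le.1 ((abs_le.1 ((pi3_coord_le_norm x k).trans hn.le)).1 |> neg_le_of_neg_le)).trans (le_refl _) |>.trans (le_refl _)
      · exact (abs_le.1 ((pi3_coord_le_norm x k).trans hn.le)).2
    have : fderiv ℝ (f i) x = 0 := by
      have hss := support_fderiv_subset ℝ (f := f i)
      by_contra hne
      exact hxt (subset_trans hss (subset_refl _) (by exact hne : x ∈ Function.support (fderiv ℝ (f i))))
    simp [this]
  rw [heq, key]
  apply Finset.sum_eq_zero
  intro i _
  have h1 : ∀ x : Fin 2 → ℝ, f i (i.insertNth (b i) x) = 0 := fun x =>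
    hzero i _ (by rw [Fin.insertNth_apply_same]; simp [hb, abs_of_pos hr0])
  have h2 : ∀ x : Fin 2 → ℝ, f i (i.insertNth (a i) x) = 0 := fun x =>
    hzero i _ (by rw [Fin.insertNth_apply_same]; simp [ha, abs_of_pos hr0])
  simp only [h1, h2]
  simp

lemma div_integral_zero (g : Fin 3 → E3 → ℝ)
    (hg : ∀ i, ContDiff ℝ 1 (g i)) (hsupp : ∀ i, HasCompactSupport (g i)) :
    ∫ x : E3, ∑ i, pd i (g i) x = 0 := by
  set e : E3 ≃L[ℝ] (Fin 3 → ℝ) := EuclideanSpace.equiv (Fin 3) ℝ with he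
  have hmp : MeasurePreserving (⇑(MeasurableEquiv.toLp 2 (Fin 3 → ℝ)))
      volume volume := (EuclideanSpace.volume_preserving_symm_measurableEquiv_toLp (Fin 3)).symm
  have hco : ⇑(MeasurableEquiv.toLp 2 (Fin 3 → ℝ)) = ⇑e.symm := rfl
  have htrans : ∫ x : E3, ∑ i, pd i (g i) x
      = ∫ y : Fin 3 → ℝ, ∑ i, pd i (g i) (e.symm y) := by
    rw [← hmp.integral_comp (MeasurableEquiv.toLp 2 (Fin 3 → ℝ)).measurableEmbedding]
    rfl
  rw [htrans]
  have hkey : ∀ (i : Fin 3) (y : Fin 3 → ℝ),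
      fderiv ℝ (fun z => g i (e.symm z)) y (Pi.single i 1) = pd i (g i) (e.symm y) := by
    intro i y
    have hd : HasFDerivAt (fun z => g i (e.symm z))
        ((fderiv ℝ (g i) (e.symm y)).comp (e.symm : (Fin 3 → ℝ) →L[ℝ] E3)) y :=
      ((((hg i).differentiable one_ne_zero) (e.symm y)).hasFDerivAt).comp y e.symm.hasFDerivAt
    rw [hd.fderiv]
    show fderiv ℝ (g i) (e.symm y) (e.symm (Pi.single i 1)) = fderiv ℝ (g i) (e.symm y) (EuclideanSpace.single i 1)
    congr 1
  rw [← div_integral_zero_pi (fun i z => g i (e.symm z))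
    (fun i => (hg i).comp e.symm.contDiff)
    (fun i => (hsupp i).comp_homeomorph e.symm.toHomeomorph)]
  congr 1
  ext y
  exact Finset.sum_congr rfl fun i _ => (hkey i y).symm

lemma exists_bump : ∃ (φ : E3 → ℝ) (K : ℝ), 0 < K ∧ ContDiff ℝ 1 φ ∧
    (∀ x, 0 ≤ φ x) ∧ (∀ x, φ x ≤ 1) ∧
    (∀ x : E3, ‖x‖ ≤ 1 → φ x = 1) ∧
    (∀ x : E3, 2 ≤ ‖x‖ → φ x = 0) ∧
    (∀ x, ‖fderiv ℝ φ x‖ ≤ K) := by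
  let hb : ContDiffBump (0 : E3) := ⟨1, 2, one_pos, one_lt_two⟩
  set φ : E3 → ℝ := ⇑hb with hφ
  have hsm : ContDiff ℝ 1 φ := hb.contDiff (n := 1)
  have hsupp : HasCompactSupport φ := hb.hasCompactSupport
  have hKc : Continuous fun x => ‖fderiv ℝ φ x‖ :=
    ((hsm.continuous_fderiv one_ne_zero)).norm
  obtain ⟨K, hK⟩ := (hsupp.fderiv ℝ).exists_bound_of_continuous
    (hsm.continuous_fderiv one_ne_zero)
  refine ⟨φ, max K 1, lt_of_lt_of_le one_pos (le_max_right _ _), hsm,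
    fun x => hb.nonneg, fun x => hb.le_one, ?_, ?_, fun x => le_trans ?_ (le_max_left _ _)⟩
  · intro x hx
    exact hb.one_of_mem_closedBall (by show dist x 0 ≤ hb.rIn; show dist x 0 ≤ (1:ℝ); simpa [dist_zero_right] using hx)
  · intro x hx
    apply hb.zero_of_le_dist
    show hb.rOut ≤ dist x 0
    show (2:ℝ) ≤ dist x 0
    simpa [dist_zero_right] using hx
  · simpa using hK x

lemma scaled_bump (φ : E3 → ℝ) (K : ℝ) (hK0 : 0 < K) (hsm : ContDiff ℝ 1 φ)
    (h0 : ∀ x, 0 ≤ φ x) (h1 : ∀ x, φ x ≤ 1)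
    (hone : ∀ x : E3, ‖x‖ ≤ 1 → φ x = 1) (hzero : ∀ x : E3, 2 ≤ ‖x‖ → φ x = 0)
    (hK : ∀ x, ‖fderiv ℝ φ x‖ ≤ K) (R : ℝ) (hR : 0 < R) :
    ∃ ψ : E3 → ℝ, ContDiff ℝ 1 ψ ∧ HasCompactSupport ψ ∧
      (∀ x, 0 ≤ ψ x) ∧ (∀ x, ψ x ≤ 1) ∧
      (∀ x : E3, ‖x‖ ≤ R/2 → ψ x = 1) ∧
      tsupport ψ ⊆ Metric.closedBall (0:E3) R ∧
      (∀ x, ‖fderiv ℝ ψ x‖ ≤ 2/R * K) := by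
  have hc : 0 < 2/R := by positivity
  set ψ : E3 → ℝ := fun x => φ ((2/R) • x) with hψ
  have hlin : ContDiff ℝ 1 (fun x : E3 => (2/R) • x) := (contDiff_id.const_smul (2/R))
  have hψsm : ContDiff ℝ 1 ψ := hsm.comp hlin
  have hnorm : ∀ x : E3, ‖(2/R) • x‖ = 2/R * ‖x‖ := by
    intro x; rw [norm_smul, Real.norm_eq_abs, abs_of_pos hc]
  have hsupp : Function.support ψ ⊆ Metric.ball (0:E3) R := by
    intro x hx
    rw [Metric.mem_ball, dist_zero_right]
    by_contra hxx
    push_neg at hxx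
    refine hx (hzero _ ?_)
    rw [hnorm]
    calc (2:ℝ) = 2/R * R := by field_simp
      _ ≤ 2/R * ‖x‖ := by gcongr
  have htsupp : tsupport ψ ⊆ Metric.closedBall (0:E3) R :=
    closure_minimal (hsupp.trans Metric.ball_subset_closedBall) Metric.isClosed_closedBall
  refine ⟨ψ, hψsm, HasCompactSupport.of_support_subset_isCompact
      (isCompact_closedBall _ _) (hsupp.trans Metric.ball_subset_closedBall), fun x => h0 _, fun x => h1 _, ?_, htsupp, ?_⟩
  · intro x hx
    apply hone
    rw [hnorm]
    calc 2/R * ‖x‖ ≤ 2/R * (R/2) := by gcongr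
      _ = 1 := by field_simp
  · intro x
    set L : E3 →L[ℝ] E3 := (2/R) • ContinuousLinearMap.id ℝ E3 with hL
    have hdlin : HasFDerivAt (fun x : E3 => (2/R) • x) L x := (hasFDerivAt_id x).const_smul (2/R)
    have hd : HasFDerivAt ψ ((fderiv ℝ φ ((2/R) • x)).comp L) x :=
      (((hsm.differentiable one_ne_zero) _).hasFDerivAt).comp x hdlin
    rw [hd.fderiv]
    calc ‖(fderiv ℝ φ ((2/R) • x)).comp L‖ ≤ ‖fderiv ℝ φ ((2/R) • x)‖ * ‖L‖ :=
          ContinuousLinearMap.opNorm_comp_le _ _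
      _ ≤ K * (2/R) := by
          apply mul_le_mul (hK _) ?_ (norm_nonneg _) hK0.le
          calc ‖L‖ ≤ ‖(2/R : ℝ)‖ * ‖ContinuousLinearMap.id ℝ E3‖ := by rw [hL]; exact norm_smul_le (2/R) (ContinuousLinearMap.id ℝ E3)
            _ ≤ (2/R) * 1 := by
                rw [Real.norm_eq_abs, abs_of_pos hc]
                exact mul_le_mul_of_nonneg_left ContinuousLinearMap.norm_id_le hc.le
            _ = 2/R := mul_one _
      _ = 2/R * K := mul_comm _ _

lemma main_est (u₀ : E3) (V : E3 → Fin 3 → Fin 3 → ℝ)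
    (hV : ContDiff ℝ 1 V)
    (hdivV : ∀ x j, ∑ i, pd i (fun y => V y i j) x = u₀ j)
    (j : Fin 3) (φ : E3 → ℝ) (K : ℝ) (hK0 : 0 < K) (hsm : ContDiff ℝ 1 φ)
    (h0 : ∀ x, 0 ≤ φ x) (h1 : ∀ x, φ x ≤ 1)
    (hone : ∀ x : E3, ‖x‖ ≤ 1 → φ x = 1) (hzero : ∀ x : E3, 2 ≤ ‖x‖ → φ x = 0)
    (hK : ∀ x, ‖fderiv ℝ φ x‖ ≤ K) (R : ℝ) (hR : 0 < R) :
    |u₀ j| * (volume (Metric.closedBall (0:E3) (R/2))).toReal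
      ≤ (2/R*K) * 3 *
        ∫ x in Metric.ball (0:E3) R, ‖V x - ⨍ y in Metric.ball (0:E3) R, V y‖ := by
  obtain ⟨ψ, hψsm, hψcs, hψ0, hψ1, hψone, hψts, hψd⟩ :=
    scaled_bump φ K hK0 hsm h0 h1 hone hzero hK R hR
  set M : Fin 3 → Fin 3 → ℝ := ⨍ y in Metric.ball (0:E3) R, V y with hM
  have hVij : ∀ i : Fin 3, ContDiff ℝ 1 (fun x => V x i j) := by
    intro i
    exact (contDiff_pi.1 ((contDiff_pi.1 hV) i)) j
  set g : Fin 3 → E3 → ℝ := fun i x => ψ x * (V x i j - M i j) with hg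
  set h : E3 → ℝ := fun x => ∑ i, (V x i j - M i j) * pd i ψ x with hh
  -- continuity facts
  have hpdψc : ∀ i, Continuous (pd i ψ) := by
    intro i
    exact ((hψsm.continuous_fderiv one_ne_zero).clm_apply continuous_const)
  have hVijc : ∀ i, Continuous (fun x => V x i j) := fun i => (hVij i).continuous
  have hhc : Continuous h := by
    apply continuous_finset_sum
    intro i _
    exact (((hVijc i).sub continuous_const).mul (hpdψc i))
  -- pointwise identity for the divergence
  have hpd : ∀ x, (∑ i, pd i (g i) x) = ψ x * u₀ j + h x := by
    intro x
    have hterm : ∀ i : Fin 3, pd i (g i) x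
        = ψ x * pd i (fun y => V y i j) x + (V x i j - M i j) * pd i ψ x := by
      intro i
      have h1' : HasFDerivAt (fun y => V y i j - M i j)
          (fderiv ℝ (fun y => V y i j) x) x :=
        ((((hVij i).differentiable one_ne_zero) x).hasFDerivAt).sub_const _
      have h2' : HasFDerivAt ψ (fderiv ℝ ψ x) x :=
        (((hψsm.differentiable one_ne_zero) x).hasFDerivAt)
      have hmul := h2'.mul h1'
      show fderiv ℝ (fun y => ψ y * (V y i j - M i j)) x (EuclideanSpace.single i 1) = _
      rw [show (fun y => ψ y * (V y i j - M i j)) = (ψ * fun y => V y i j - M i j) from rfl, hmul.fderiv]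
      show ψ x * (fderiv ℝ (fun y => V y i j) x (EuclideanSpace.single i 1))
          + (V x i j - M i j) * (fderiv ℝ ψ x (EuclideanSpace.single i 1)) = _
      rfl
    calc ∑ i, pd i (g i) x
        = ∑ i, (ψ x * pd i (fun y => V y i j) x + (V x i j - M i j) * pd i ψ x) :=
          Finset.sum_congr rfl (fun i _ => hterm i)
      _ = ψ x * ∑ i, pd i (fun y => V y i j) x + h x := by
          rw [Finset.sum_add_distrib, Finset.mul_sum]
      _ = ψ x * u₀ j + h x := by rw [hdivV x j]
  -- integrability
  have hψcont : Continuous ψ := hψsm.continuous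
  have hψint : Integrable ψ := hψcont.integrable_of_hasCompactSupport hψcs
  have hhcs : HasCompactSupport h := by
    apply HasCompactSupport.of_support_subset_isCompact hψcs
    intro x hx
    by_contra hxt
    apply hx
    have hfz : fderiv ℝ ψ x = 0 := by
      by_contra hne
      exact hxt (support_fderiv_subset ℝ hne)
    unfold h
    simp [pd, hfz]
  have hhint : Integrable h := hhc.integrable_of_hasCompactSupport hhcs
  -- integrate the identity
  have hzero' : u₀ j * ∫ x, ψ x = - ∫ x, h x := by
    have := div_integral_zero g
      (fun i => hψsm.mul ((hVij i).sub contDiff_const))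
      (fun i => by
        apply HasCompactSupport.of_support_subset_isCompact hψcs
        intro x hx
        by_contra hxt
        apply hx
        have : ψ x = 0 := image_eq_zero_of_notMem_tsupport hxt
        unfold g
        simp [this])
    simp only [hpd] at this
    rw [integral_add (hψint.mul_const _) hhint] at this
    rw [integral_mul_const] at this
    linarith [this]
  -- lower bound on ∫ψ
  have hψlb : (volume (Metric.closedBall (0:E3) (R/2))).toReal ≤ ∫ x, ψ x := by
    have h1'' : ∫ x in Metric.closedBall (0:E3) (R/2), ψ x
        = (volume (Metric.closedBall (0:E3) (R/2))).toReal := by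
      rw [setIntegral_congr_fun (Metric.isClosed_closedBall.measurableSet)
        (fun x hx => hψone x (by simpa [dist_zero_right] using hx))]
      simp [Measure.real]
    rw [← h1'']
    exact setIntegral_le_integral hψint (Filter.Eventually.of_forall hψ0)
  -- main chain
  have habs : |u₀ j| * (volume (Metric.closedBall (0:E3) (R/2))).toReal ≤ |∫ x, h x| := by
    rcases eq_or_ne (u₀ j) 0 with h' | h'
    · simp [h', abs_nonneg]
    · calc |u₀ j| * (volume (Metric.closedBall (0:E3) (R/2))).toReal
          ≤ |u₀ j| * ∫ x, ψ x := by gcongr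
        _ = |u₀ j * ∫ x, ψ x| := by
            rw [abs_mul, abs_of_nonneg (le_trans (by positivity) hψlb)]
        _ = |∫ x, h x| := by rw [hzero', abs_neg]
  refine habs.trans ?_
  -- bound |∫ h| by the set integral
  have hWbd : ∀ (x : E3) (i : Fin 3), |V x i j - M i j| ≤ ‖V x - M‖ := by
    intro x i
    calc |V x i j - M i j| = |((V x - M) i) j| := by simp [Pi.sub_apply]
      _ ≤ ‖(V x - M) i‖ := by simpa using norm_le_pi_norm ((V x - M) i) j
      _ ≤ ‖V x - M‖ := by simpa using norm_le_pi_norm (V x - M) i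
  have hptw : ∀ x : E3, |h x| ≤ (2/R*K) * 3 * ‖V x - M‖ := by
    intro x
    calc |h x| ≤ ∑ i, |(V x i j - M i j) * pd i ψ x| := Finset.abs_sum_le_sum_abs _ _
      _ ≤ ∑ _i : Fin 3, ‖V x - M‖ * (2/R*K) := by
          apply Finset.sum_le_sum
          intro i _
          rw [abs_mul]
          apply mul_le_mul (hWbd x i) ?_ (abs_nonneg _) (norm_nonneg _)
          calc |pd i ψ x| ≤ ‖fderiv ℝ ψ x‖ * ‖EuclideanSpace.single i (1:ℝ)‖ :=
                (fderiv ℝ ψ x).le_opNorm _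
            _ ≤ (2/R*K) * 1 := by
                apply mul_le_mul (hψd x) ?_ (norm_nonneg _) (by positivity)
                rw [EuclideanSpace.norm_single]
                simp
            _ = 2/R*K := mul_one _
      _ = (2/R*K) * 3 * ‖V x - M‖ := by
          rw [Finset.sum_const]
          simp
          ring
  have hVMc : Continuous fun x : E3 => ‖V x - M‖ := (hV.continuous.sub continuous_const).norm
  have hballae : (Metric.closedBall (0:E3) R : Set E3) =ᵐ[volume] Metric.ball (0:E3) R := by
    rw [Filter.eventuallyEq_set]
    apply (MeasureTheory.measure_eq_zero_iff_ae_notMem.1 (Measure.addHaar_sphere volume (0:E3) R)).mono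
    intro x hx
    simp only [Metric.mem_closedBall, Metric.mem_ball]
    constructor
    · intro hle
      rcases lt_or_eq_of_le hle with h' | h'
      · exact h'
      · exact absurd (by simpa [Metric.mem_sphere] using h') hx
    · exact le_of_lt
  have hhz : ∀ x : E3, x ∉ Metric.closedBall (0:E3) R → h x = 0 := by
    intro x hx
    have hxt : x ∉ tsupport ψ := fun hmem => hx (hψts hmem)
    have hfz : fderiv ℝ ψ x = 0 := by
      by_contra hne
      exact hxt (support_fderiv_subset ℝ hne)
    unfold h
    simp [pd, hfz]
  calc |∫ x, h x| ≤ ∫ x, |h x| := by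
        simpa using norm_integral_le_integral_norm h
    _ = ∫ x in Metric.closedBall (0:E3) R, |h x| := by
        symm
        apply setIntegral_eq_integral_of_forall_compl_eq_zero
        intro x hx
        rw [hhz x hx, abs_zero]
    _ ≤ ∫ x in Metric.closedBall (0:E3) R, (2/R*K) * 3 * ‖V x - M‖ := by
        apply setIntegral_mono_on hhint.abs.integrableOn
          ((continuous_const.mul hVMc).continuousOn.integrableOn_compact (isCompact_closedBall _ _))
          Metric.isClosed_closedBall.measurableSet
        exact fun x _ => hptw x
    _ = (2/R*K) * 3 * ∫ x in Metric.closedBall (0:E3) R, ‖V x - M‖ := by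
        rw [MeasureTheory.integral_const_mul]
    _ = (2/R*K) * 3 * ∫ x in Metric.ball (0:E3) R, ‖V x - M‖ := by
        rw [setIntegral_congr_set hballae]

lemma holder_est (F : E3 → Fin 3 → Fin 3 → ℝ) (hF : Continuous F) (s R : ℝ)
    (hs : 1 < s) (hR : 0 < R) :
    ∫ x in Metric.ball (0:E3) R, ‖F x‖
      ≤ (∫ x in Metric.ball (0:E3) R, ‖F x‖ ^ s) ^ ((1:ℝ)/s)
        * ((volume (Metric.ball (0:E3) R)).toReal) ^ ((s-1)/s) := by
  set μ := volume.restrict (Metric.ball (0:E3) R) with hμ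
  haveI : IsFiniteMeasure μ := ⟨by
    rw [hμ, Measure.restrict_apply_univ]; exact measure_ball_lt_top⟩
  have hpq : s.HolderConjugate (s/(s-1)) := Real.HolderConjugate.conjExponent hs
  obtain ⟨B, hB⟩ := (isCompact_closedBall (0:E3) R).exists_bound_of_continuousOn
    hF.continuousOn
  have hFm : MemLp (fun x => ‖F x‖) (ENNReal.ofReal s) μ := by
    apply MemLp.of_bound hF.norm.aestronglyMeasurable B
    rw [hμ]
    exact (ae_restrict_iff' Metric.isOpen_ball.measurableSet).2
      (Filter.Eventually.of_forall fun x hx => by simpa using hB x (Metric.ball_subset_closedBall hx))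
  have h1m : MemLp (fun _ : E3 => (1:ℝ)) (ENNReal.ofReal (s/(s-1))) μ := memLp_const 1
  have := MeasureTheory.integral_mul_norm_le_Lp_mul_Lq hpq hFm h1m
  simp only [norm_one, mul_one, Real.one_rpow, norm_norm] at this
  calc ∫ x in Metric.ball (0:E3) R, ‖F x‖
      ≤ (∫ a, ‖F a‖ ^ s ∂μ) ^ (1/s) * (∫ _a, (1:ℝ) ∂μ) ^ (1/(s/(s-1))) := this
    _ = (∫ x in Metric.ball (0:E3) R, ‖F x‖ ^ s) ^ ((1:ℝ)/s)
        * ((volume (Metric.ball (0:E3) R)).toReal) ^ ((s-1)/s) := by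
        congr 1
        rw [setIntegral_const, smul_eq_mul, mul_one, one_div_div]; rfl

lemma vol_ball_toReal (r : ℝ) (hr : 0 ≤ r) :
    (volume (Metric.ball (0:E3) r)).toReal
      = r^(3:ℕ) * (volume (Metric.ball (0:E3) 1)).toReal := by
  rw [Measure.addHaar_ball volume (0:E3) hr, ENNReal.toReal_mul,
    ENNReal.toReal_ofReal (by positivity)]
  congr 2
  rw [finrank_euclideanSpace_fin]

lemma vol_closedBall_toReal (r : ℝ) (hr : 0 ≤ r) :
    (volume (Metric.closedBall (0:E3) r)).toReal
      = r^(3:ℕ) * (volume (Metric.ball (0:E3) 1)).toReal := by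
  rw [Measure.addHaar_closedBall_eq_addHaar_ball]
  exact vol_ball_toReal r hr

theorem stmt_15 (u₀ : E3) (V : E3 → Fin 3 → Fin 3 → ℝ) (s C : ℝ)
    (hV : ContDiff ℝ (⊤ : ℕ∞) V)
    (hdivV : ∀ x j, ∑ i, pd i (fun y => V y i j) x = u₀ j)
    (hs : s ∈ Set.Ioc (3:ℝ) 6) (hC : 0 < C)
    (hosc : ∀ R : ℝ, 2 < R →
      (∫ x in Metric.ball (0:E3) R,
          ‖V x - ⨍ y in Metric.ball (0:E3) R, V y‖ ^ s) ^ ((1:ℝ)/s)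
        ≤ C * R ^ ((s+6)/(3*s)) * (Real.log R) ^ ((s-3)/(3*s))) :
    u₀ = 0 := by
  obtain ⟨hs3, hs6⟩ := hs
  have hs0 : (0:ℝ) < s := by linarith
  have hV1 : ContDiff ℝ 1 V := hV.of_le (by simp)
  obtain ⟨φ, K, hK0, hsm, h0, h1, hone, hzero, hK⟩ := exists_bump
  set v1 := (volume (Metric.ball (0:E3) 1)).toReal with hv1def
  have hv10 : 0 < v1 := ENNReal.toReal_pos
    (Metric.measure_ball_pos volume (0:E3) one_pos).ne' measure_ball_lt_top.ne
  set α := (s+6)/(3*s) with hα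
  set β := (s-3)/(3*s) with hβdef
  set t := (s-1)/s with ht
  set γ := α + 3*t - 4 with hγdef
  set D := 48 * K * C * v1 ^ (t - 1) with hD
  have hβ : 0 < β := div_pos (by linarith) (by linarith)
  have hγ : γ < 0 := by
    have : γ = (-2*s - 3)/(3*s) := by
      rw [hγdef, hα, ht]; field_simp; ring
    rw [this]
    apply div_neg_of_neg_of_pos (by linarith) (by linarith)
  -- the key estimate
  have est : ∀ (j : Fin 3) (R : ℝ), 2 < R → |u₀ j| ≤ D * (R ^ γ * Real.log R ^ β) := by
    intro j R hR2
    have hR0 : (0:ℝ) < R := by linarith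
    have hlogR : 0 < Real.log R := Real.log_pos (by linarith)
    set M : Fin 3 → Fin 3 → ℝ := ⨍ y in Metric.ball (0:E3) R, V y with hM
    have h1' := main_est u₀ V hV1 hdivV j φ K hK0 hsm h0 h1 hone hzero hK R hR0
    have h2' := holder_est (fun x => V x - M) (hV1.continuous.sub continuous_const) s R
      (by linarith) hR0
    have h3' := hosc R hR2
    have hP : (volume (Metric.closedBall (0:E3) (R/2))).toReal = (R/2)^(3:ℕ) * v1 :=
      vol_closedBall_toReal (R/2) (by linarith)
    have hvol : (volume (Metric.ball (0:E3) R)).toReal = R^(3:ℕ) * v1 :=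
      vol_ball_toReal R hR0.le
    have hchain : |u₀ j| * ((R/2)^(3:ℕ) * v1)
        ≤ (2/R*K) * 3 * ((C * R ^ α * Real.log R ^ β) * ((R^(3:ℕ) * v1) ^ t)) := by
      rw [← hP, ← hvol]
      refine h1'.trans ?_
      have hc3 : (0:ℝ) ≤ 2/R*K*3 := by positivity
      apply mul_le_mul_of_nonneg_left ?_ hc3
      refine h2'.trans ?_
      apply mul_le_mul_of_nonneg_right h3' (Real.rpow_nonneg ENNReal.toReal_nonneg _)
    -- rewrite RHS as D * (R^γ * logR^β) * ((R/2)^3 * v1)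
    have hrw : (2/R*K) * 3 * ((C * R ^ α * Real.log R ^ β) * ((R^(3:ℕ) * v1) ^ t))
        = (D * (R ^ γ * Real.log R ^ β)) * ((R/2)^(3:ℕ) * v1) := by
      have e1 : ((R^(3:ℕ) * v1 : ℝ)) ^ t = R ^ (3*t) * v1 ^ t := by
        rw [Real.mul_rpow (by positivity) hv10.le]
        congr 1
        rw [← Real.rpow_natCast R 3, ← Real.rpow_mul hR0.le]
        norm_num
      have e2 : R ^ γ = R ^ α * R ^ (3*t) * (R ^ (4:ℕ))⁻¹ := by
        rw [hγdef, ← Real.rpow_natCast R 4, ← Real.rpow_neg hR0.le,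
          ← Real.rpow_add hR0, ← Real.rpow_add hR0]
        norm_num [sub_eq_add_neg]
      have e3 : v1 ^ (t - 1) = v1 ^ t * v1⁻¹ := by
        rw [Real.rpow_sub hv10, Real.rpow_one, div_eq_mul_inv]
      rw [e1, e2, hD, e3]
      have hRp : (R:ℝ) ^ (4:ℕ) ≠ 0 := by positivity
      field_simp
      ring
    rw [hrw] at hchain
    have hPpos : (0:ℝ) < (R/2)^(3:ℕ) * v1 := by positivity
    exact le_of_mul_le_mul_right hchain hPpos
  -- conclusion by letting R → ∞
  have hT : Tendsto (fun R : ℝ => D * (R ^ γ * Real.log R ^ β)) atTop (nhds 0) := by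
    have h1' := (isLittleO_log_rpow_rpow_atTop β (neg_pos.2 hγ)).tendsto_div_nhds_zero
    have h2' : (fun R : ℝ => R ^ γ * Real.log R ^ β)
        =ᶠ[atTop] fun R => Real.log R ^ β / R ^ (-γ) := by
      filter_upwards [eventually_gt_atTop (0:ℝ)] with R hR0
      rw [Real.rpow_neg hR0.le, div_eq_mul_inv, inv_inv, mul_comm]
    have h3' : Tendsto (fun R : ℝ => R ^ γ * Real.log R ^ β) atTop (nhds 0) :=
      h1'.congr' h2'.symm
    simpa using h3'.const_mul D
  have hzero' : ∀ j : Fin 3, u₀ j = 0 := by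
    intro j
    have hle : |u₀ j| ≤ 0 := by
      apply ge_of_tendsto hT
      filter_upwards [eventually_gt_atTop (2:ℝ)] with R hR
      exact est j R hR
    exact abs_eq_zero.1 (le_antisymm hle (abs_nonneg _))
  ext j
  exact hzero' j
end
end
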